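/- The complex vector space of homogeneous polynomials of degree 4 in ℂ[z₀,z₁,z₂] invariant under the substitution d (f(λz₀,λ²z₁,λ⁴z₂) = f) is exactly the three-dimensional span of z₀³z₂, z₁³z₀ and z₂³z₁. Moreover, for each cube root of unity ζ, the subspace of such polynomials additionally satisfying f(z₂,z₀,z₁) = ζ·f(z₀,z₁,z₂) is one-dimensional, spanned by Q_ζ = z₀³z₂ + ζ²·z₂³z₁ + ζ·z₁³z₀; in particular, the degree-4 polynomials invariant under both d and the cyclic substitution τ are exactly the scalar multiples of the Klein quartic z₀³z₂ + z₂³z₁ + z₁³z₀. -/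

import Mathlib

open MvPolynomial

noncomputable def lam : ℂ := Complex.exp (2 * Real.pi * Complex.I / 7)

/-- The substitution `d : (z₀, z₁, z₂) ↦ (λz₀, λ²z₁, λ⁴z₂)` acting on polynomials. -/
noncomputable def dSub : MvPolynomial (Fin 3) ℂ →ₐ[ℂ] MvPolynomial (Fin 3) ℂ :=
  aeval ![C lam * X 0, C (lam ^ 2) * X 1, C (lam ^ 4) * X 2]

/-- The cyclic substitution `τ : (z₀, z₁, z₂) ↦ (z₂, z₀, z₁)` acting on polynomials. -/
noncomputable def tauSub : MvPolynomial (Fin 3) ℂ →ₐ[ℂ] MvPolynomial (Fin 3) ℂ :=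
  aeval ![X 2, X 0, X 1]

/-- `Q_ζ = z₀³z₂ + ζ²·z₂³z₁ + ζ·z₁³z₀`. -/
noncomputable def Qzeta (ζ : ℂ) : MvPolynomial (Fin 3) ℂ :=
  X 0 ^ 3 * X 2 + C (ζ ^ 2) * (X 2 ^ 3 * X 1) + C ζ * (X 1 ^ 3 * X 0)

/-!
The substitution `d` is diagonal, so it multiplies the monomial `z₀^a z₁^b z₂^c` by
`λ^(a + 2b + 4c)`; a polynomial is `d`-invariant iff all its monomials have `7 ∣ a + 2b + 4c`.
In degree `4` only `z₀³z₂`, `z₁³z₀`, `z₂³z₁` qualify. The cyclic substitution `τ` permutes these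
three monomials cyclically, so on their span `τ f = ζ f` is a first-order recurrence
`c (i + 1) = ζ c i` on the coefficients, whose solutions for `ζ³ = 1` are the multiples of
`(1, ζ, ζ²)`, i.e. of `Q_ζ`.
-/

namespace MvPolynomial

section CommSemiring

variable {σ R : Type*} [CommSemiring R]

theorem aeval_C_mul_X_monomial (w : σ → R) (s : σ →₀ ℕ) (a : R) :
    aeval (fun i ↦ C (w i) * X i) (monomial s a) =
      monomial s ((s.prod fun i k ↦ w i ^ k) * a) := by
  simp only [aeval_monomial, algebraMap_eq, mul_pow, Finsupp.prod_mul, ← map_pow,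
    ← map_finsuppProd, ← monomial_eq, C_mul_monomial]
  rw [mul_comm]

theorem coeff_aeval_C_mul_X (w : σ → R) (f : MvPolynomial σ R) (m : σ →₀ ℕ) :
    coeff m (aeval (fun i ↦ C (w i) * X i) f) = (m.prod fun i k ↦ w i ^ k) * coeff m f := by
  induction f using MvPolynomial.induction_on' with
  | monomial s a =>
    classical
    rw [aeval_C_mul_X_monomial, coeff_monomial, coeff_monomial]
    split_ifs with h <;> simp [h]
  | add p q hp hq => rw [map_add, coeff_add, coeff_add, hp, hq, mul_add]

end CommSemiring

theorem aeval_C_mul_X_eq_self_iff {σ R : Type*} [CommRing R] [NoZeroDivisors R] (w : σ → R)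
    (f : MvPolynomial σ R) :
    aeval (fun i ↦ C (w i) * X i) f = f ↔
      f ∈ restrictSupport R {m | (m.prod fun i k ↦ w i ^ k) = 1} := by
  simp only [MvPolynomial.ext_iff, coeff_aeval_C_mul_X, mem_restrictSupport_iff, Set.subset_def,
    Finset.mem_coe, mem_support_iff, Set.mem_ofPred_eq]
  refine forall_congr' fun m ↦ ?_
  rw [← sub_eq_zero, ← sub_one_mul, mul_eq_zero, sub_eq_zero, or_iff_not_imp_right]

end MvPolynomial

lemma dSub_eq_aeval : dSub = aeval fun i ↦ C (![lam, lam ^ 2, lam ^ 4] i) * X i := by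
  rw [dSub]
  congr 1
  ext i
  fin_cases i <;> rfl

lemma isPrimitiveRoot_lam : IsPrimitiveRoot lam 7 := by
  simpa [lam] using Complex.isPrimitiveRoot_exp 7 (by norm_num)

lemma prod_pow_lam (m : Fin 3 →₀ ℕ) :
    (m.prod fun i k ↦ ![lam, lam ^ 2, lam ^ 4] i ^ k) = lam ^ (m 0 + 2 * m 1 + 4 * m 2) := by
  rw [Finsupp.prod_fintype _ _ fun _ ↦ pow_zero _, Fin.prod_univ_three]
  simp only [Matrix.cons_val_zero, Matrix.cons_val_one, Matrix.cons_val_two, Matrix.head_cons,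
    Matrix.tail_cons, ← pow_mul, pow_add]

-- Indices live in `Fin 3`, so `i + 2 = i - 1`: the exponents of `z₀³z₂`, `z₁³z₀`, `z₂³z₁`.
noncomputable def kleinExp (i : Fin 3) : Fin 3 →₀ ℕ :=
  Finsupp.single i 3 + Finsupp.single (i + 2) 1

lemma kleinExp_injective : Function.Injective kleinExp := by
  intro i j h
  have h3 : kleinExp j i = 3 := by rw [← h]; fin_cases i <;> simp [kleinExp]
  revert h3
  fin_cases i <;> fin_cases j <;> simp [kleinExp]

lemma degree_eq_four_and_dvd_iff (m : Fin 3 →₀ ℕ) :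
    m.degree = 4 ∧ 7 ∣ m 0 + 2 * m 1 + 4 * m 2 ↔ m ∈ Set.range kleinExp := by
  rw [Finsupp.degree_eq_sum, Fin.sum_univ_three]
  constructor
  · rintro ⟨h4, k, hk⟩
    have hk2 : k ≤ 2 := by omega
    have hm : (m 0 = 3 ∧ m 1 = 0 ∧ m 2 = 1) ∨ (m 0 = 1 ∧ m 1 = 3 ∧ m 2 = 0) ∨
        (m 0 = 0 ∧ m 1 = 1 ∧ m 2 = 3) := by
      interval_cases k <;> omega
    rcases hm with h | h | h
    · exact ⟨0, by ext i; fin_cases i <;> simp [kleinExp, h]⟩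
    · exact ⟨1, by ext i; fin_cases i <;> simp [kleinExp, h]⟩
    · exact ⟨2, by ext i; fin_cases i <;> simp [kleinExp, h]⟩
  · rintro ⟨i, rfl⟩
    fin_cases i <;> simp [kleinExp]

noncomputable def kleinMonomial (R : Type*) [CommSemiring R] (i : Fin 3) :
    MvPolynomial (Fin 3) R :=
  X i ^ 3 * X (i + 2)

lemma monomial_kleinExp {R : Type*} [CommSemiring R] (i : Fin 3) :
    monomial (kleinExp i) (1 : R) = kleinMonomial R i := by
  rw [kleinExp, kleinMonomial, ← mul_one (1 : R), ← monomial_mul, X_pow_eq_monomial, X]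

lemma range_kleinMonomial (R : Type*) [CommSemiring R] :
    Set.range (kleinMonomial R) = {X 0 ^ 3 * X 2, X 1 ^ 3 * X 0, X 2 ^ 3 * X 1} := by
  ext p
  simp [kleinMonomial, Fin.exists_fin_succ, eq_comm]

lemma linearIndependent_kleinMonomial (R : Type*) [CommSemiring R] :
    LinearIndependent R (kleinMonomial R) := by
  have := (basisMonomials (Fin 3) R).linearIndependent.comp kleinExp kleinExp_injective
  simpa only [coe_basisMonomials, Function.comp_def, monomial_kleinExp] using this

theorem setOf_dSub_invariant_eq_restrictSupport :
    {f : MvPolynomial (Fin 3) ℂ | f.IsHomogeneous 4 ∧ dSub f = f} =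
      restrictSupport ℂ (Set.range kleinExp) := by
  ext f
  rw [Set.mem_ofPred_eq, SetLike.mem_coe, ← mem_homogeneousSubmodule,
    homogeneousSubmodule_eq_finsupp_supported, dSub_eq_aeval, aeval_C_mul_X_eq_self_iff]
  change f ∈ restrictSupport ℂ _ ∧ f ∈ restrictSupport ℂ _ ↔ _
  simp only [mem_restrictSupport_iff, ← Set.subset_inter_iff]
  refine Eq.to_iff (congrArg _ (Set.ext fun m ↦ ?_))
  rw [← degree_eq_four_and_dvd_iff, Set.mem_inter_iff, Set.mem_ofPred_eq, Set.mem_ofPred_eq,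
    prod_pow_lam, isPrimitiveRoot_lam.pow_eq_one_iff_dvd]

theorem setOf_dSub_invariant_eq_span :
    {f : MvPolynomial (Fin 3) ℂ | f.IsHomogeneous 4 ∧ dSub f = f} =
      Submodule.span ℂ (Set.range (kleinMonomial ℂ)) := by
  rw [setOf_dSub_invariant_eq_restrictSupport, restrictSupport_eq_span, ← Set.range_comp]
  simp only [Function.comp_def, monomial_kleinExp]

lemma tauSub_eq_rename : tauSub = rename (· + 2) := by
  refine algHom_ext fun i ↦ ?_
  fin_cases i <;> simp [tauSub]

lemma tauSub_sum_smul_kleinMonomial (c : Fin 3 → ℂ) :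
    tauSub (∑ i, c i • kleinMonomial ℂ i) = ∑ i, c (i + 1) • kleinMonomial ℂ i := by
  have hτ (i : Fin 3) : tauSub (kleinMonomial ℂ i) = kleinMonomial ℂ (i + 2) := by
    simp only [tauSub_eq_rename, kleinMonomial, map_mul, map_pow, rename_X, add_assoc]
  simp only [map_sum, map_smul, hτ]
  exact Fintype.sum_equiv (Equiv.addRight 2) _ _ fun i ↦ by simp [add_assoc]

lemma tauSub_sum_smul_kleinMonomial_eq_C_mul_iff (ζ : ℂ) (c : Fin 3 → ℂ) :
    tauSub (∑ i, c i • kleinMonomial ℂ i) = C ζ * ∑ i, c i • kleinMonomial ℂ i ↔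
      ∀ i, c (i + 1) = ζ * c i := by
  rw [tauSub_sum_smul_kleinMonomial, ← smul_eq_C_mul, Finset.smul_sum]
  simp only [smul_smul]
  exact ⟨fun h ↦ Fintype.linearIndependent_iffₛ.mp (linearIndependent_kleinMonomial ℂ) _ _ h,
    fun h ↦ Finset.sum_congr rfl fun i _ ↦ by rw [h]⟩

lemma forall_fin_three_add_one_eq_mul_iff {M : Type*} [CommMonoid M] {ζ : M} (hζ : ζ ^ 3 = 1)
    (c : Fin 3 → M) : (∀ i, c (i + 1) = ζ * c i) ↔ ∃ a, c = fun i : Fin 3 ↦ a * ζ ^ (i : ℕ) := by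
  constructor
  · intro h
    have h0 : c 1 = ζ * c 0 := h 0
    have h1 : c 2 = ζ * c 1 := h 1
    refine ⟨c 0, funext fun i ↦ ?_⟩
    fin_cases i
    · simp
    · simp [h0, mul_comm]
    · simp [h1, h0, sq, mul_comm, mul_assoc]
  · rintro ⟨a, rfl⟩ i
    fin_cases i
    · simp [mul_comm]
    · simp [sq, mul_comm, mul_left_comm]
    · simp only [Fin.reduceFinMk, Fin.isValue, Fin.reduceAdd, Fin.val_zero, pow_zero, mul_one]
      rw [mul_left_comm, ← pow_succ', hζ, mul_one]

lemma Qzeta_eq_sum (ζ : ℂ) : Qzeta ζ = ∑ i : Fin 3, ζ ^ (i : ℕ) • kleinMonomial ℂ i := by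
  simp only [Qzeta, kleinMonomial, smul_eq_C_mul, Fin.sum_univ_three, C_pow, Fin.isValue,
    Fin.val_zero, Fin.val_one, Fin.val_two, Fin.reduceAdd, pow_zero, pow_one, one_mul]
  ring

lemma smul_Qzeta (ζ a : ℂ) :
    a • Qzeta ζ = ∑ i : Fin 3, (a * ζ ^ (i : ℕ)) • kleinMonomial ℂ i := by
  simp only [Qzeta_eq_sum, Finset.smul_sum, smul_smul]

theorem setOf_dSub_invariant_tauSub_eigen_eq_span_Qzeta (ζ : ℂ) (hζ : ζ ^ 3 = 1) :
    {f : MvPolynomial (Fin 3) ℂ | f.IsHomogeneous 4 ∧ dSub f = f ∧ tauSub f = C ζ * f} =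
      Submodule.span ℂ {Qzeta ζ} := by
  ext f
  have hd := Set.ext_iff.mp setOf_dSub_invariant_eq_span f
  simp only [Set.mem_ofPred_eq, SetLike.mem_coe, Submodule.mem_span_range_iff_exists_fun] at hd
  simp only [Set.mem_ofPred_eq, ← and_assoc, hd, SetLike.mem_coe, Submodule.mem_span_singleton]
  constructor
  · rintro ⟨⟨c, rfl⟩, hτ⟩
    rw [tauSub_sum_smul_kleinMonomial_eq_C_mul_iff, forall_fin_three_add_one_eq_mul_iff hζ] at hτ
    obtain ⟨a, rfl⟩ := hτ
    exact ⟨a, smul_Qzeta ζ a⟩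
  · rintro ⟨a, rfl⟩
    rw [smul_Qzeta]
    exact ⟨⟨_, rfl⟩, (tauSub_sum_smul_kleinMonomial_eq_C_mul_iff ζ _).mpr
      ((forall_fin_three_add_one_eq_mul_iff hζ _).mpr ⟨a, rfl⟩)⟩

lemma Qzeta_ne_zero (ζ : ℂ) : Qzeta ζ ≠ 0 := by
  intro h
  rw [Qzeta_eq_sum] at h
  simpa using Fintype.linearIndependent_iff.mp (linearIndependent_kleinMonomial ℂ) _ h 0

lemma Qzeta_one : Qzeta 1 = X 0 ^ 3 * X 2 + X 2 ^ 3 * X 1 + X 1 ^ 3 * X 0 := by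
  simp [Qzeta]

/-- The homogeneous degree-4 polynomials invariant under `d` are exactly the span of
`z₀³z₂`, `z₁³z₀` and `z₂³z₁`; for each cube root of unity ζ the subspace of those that
additionally satisfy `f ∘ τ = ζ·f` is one-dimensional, spanned by
`Q_ζ = z₀³z₂ + ζ²·z₂³z₁ + ζ·z₁³z₀`; in particular the degree-4 polynomials invariant under
both `d` and `τ` are exactly the scalar multiples of the Klein quartic. -/
theorem degree_four_invariants :
    ({f : MvPolynomial (Fin 3) ℂ | f.IsHomogeneous 4 ∧ dSub f = f} =
      (Submodule.span ℂ ({X 0 ^ 3 * X 2, X 1 ^ 3 * X 0, X 2 ^ 3 * X 1} :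
        Set (MvPolynomial (Fin 3) ℂ)) : Set (MvPolynomial (Fin 3) ℂ))) ∧
    (∀ ζ : ℂ, ζ ^ 3 = 1 →
      ({f : MvPolynomial (Fin 3) ℂ | f.IsHomogeneous 4 ∧ dSub f = f ∧ tauSub f = C ζ * f} =
        (Submodule.span ℂ ({Qzeta ζ} : Set (MvPolynomial (Fin 3) ℂ)) :
          Set (MvPolynomial (Fin 3) ℂ)) ∧ Qzeta ζ ≠ 0)) ∧
    ({f : MvPolynomial (Fin 3) ℂ | f.IsHomogeneous 4 ∧ dSub f = f ∧ tauSub f = f} =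
      {f : MvPolynomial (Fin 3) ℂ | ∃ c : ℂ,
        f = C c * (X 0 ^ 3 * X 2 + X 2 ^ 3 * X 1 + X 1 ^ 3 * X 0)}) := by
  refine ⟨by rw [setOf_dSub_invariant_eq_span, range_kleinMonomial],
    fun ζ hζ ↦ ⟨setOf_dSub_invariant_tauSub_eigen_eq_span_Qzeta ζ hζ,
      Qzeta_ne_zero ζ⟩, ?_⟩
  have h := setOf_dSub_invariant_tauSub_eigen_eq_span_Qzeta 1 (one_pow 3)
  simp only [map_one, one_mul, Qzeta_one] at h
  rw [h]
  ext f
  simp only [SetLike.mem_coe, Submodule.mem_span_singleton, smul_eq_C_mul, Set.mem_ofPred_eq,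
    eq_comm]
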